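/- Let 1≤i≤m, α∈T and x,y∈V(Γᵢ(α)). If d⁺_{Γᵢ(α)}(x)>d⁺_{Γᵢ(α)}(y), then (x,y)∈Γ_{1,3} and p^{(1,3)}_{(2,2),(3,1)}≠0. -/

import Mathlib

namespace Paper

/-- A digraph: a set of vertices together with a set of arcs (ordered pairs of
distinct vertices). -/
structure Digraph (V : Type*) where
  Adj : V → V → Prop
  loopless : ∀ v : V, ¬ Adj v v

variable {V V' : Type*}

namespace Digraph

/-- There is a directed walk of length `n` from `x` to `y`. -/
def HasPath (G : Digraph V) (x y : V) (n : ℕ) : Prop :=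
  ∃ f : ℕ → V, f 0 = x ∧ f n = y ∧ ∀ k < n, G.Adj (f k) (f (k + 1))

/-- The distance `∂(x,y)`: the length of a shortest directed path from `x` to `y`. -/
noncomputable def dist (G : Digraph V) (x y : V) : ℕ :=
  sInf {n | G.HasPath x y n}

/-- The two-way distance `∂̃(x,y) = (∂(x,y), ∂(y,x))`. -/
noncomputable def tdist (G : Digraph V) (x y : V) : ℕ × ℕ :=
  (G.dist x y, G.dist y x)

/-- The two-way distance set `∂̃(Γ)`. -/
def tdSet (G : Digraph V) : Set (ℕ × ℕ) :=
  {p | ∃ x y : V, G.tdist x y = p}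

def StronglyConnected (G : Digraph V) : Prop :=
  ∀ x y : V, ∃ n, G.HasPath x y n

/-- `P_{ĩ,j̃}(x,y)`: the set of `z` with `∂̃(x,z) = ĩ` and `∂̃(z,y) = j̃`. -/
def P (G : Digraph V) (i j : ℕ × ℕ) (x y : V) : Set V :=
  {z | G.tdist x z = i ∧ G.tdist z y = j}

open Classical in
/-- The intersection number `p^{h̃}_{ĩ,j̃}`, defined using an arbitrarily chosen
pair at two-way distance `h̃` (and `0` if there is no such pair). -/
noncomputable def p (G : Digraph V) (h i j : ℕ × ℕ) : ℕ :=
  if hh : ∃ xy : V × V, G.tdist xy.1 xy.2 = h then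
    Nat.card (G.P i j hh.choose.1 hh.choose.2)
  else 0

/-- A weakly distance-regular digraph: strongly connected, and
`|P_{ĩ,j̃}(x,y)|` depends only on `∂̃(x,y)`, `ĩ` and `j̃`. -/
def IsWDR (G : Digraph V) : Prop :=
  G.StronglyConnected ∧
    ∀ (i j : ℕ × ℕ) (x y : V), Nat.card (G.P i j x y) = G.p (G.tdist x y) i j

/-- Commutativity: `p^{h̃}_{ĩ,j̃} = p^{h̃}_{j̃,ĩ}` for all `h̃,ĩ,j̃ ∈ ∂̃(Γ)`. -/
def IsCommutative (G : Digraph V) : Prop :=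
  ∀ h i j : ℕ × ℕ, h ∈ G.tdSet → i ∈ G.tdSet → j ∈ G.tdSet → G.p h i j = G.p h j i

/-- `Γ` is an undirected graph, i.e. its arc set is symmetric. -/
def IsUndirected (G : Digraph V) : Prop :=
  ∀ x y : V, G.Adj x y → G.Adj y x

def IsSemicomplete (G : Digraph V) : Prop :=
  ∀ x y : V, x ≠ y → (G.Adj x y ∨ G.Adj y x)

/-- `Γ` is a complete (undirected) graph. -/
def IsCompleteDigraph (G : Digraph V) : Prop :=
  ∀ x y : V, x ≠ y → (G.Adj x y ∧ G.Adj y x)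

/-- The underlying graph of a digraph. -/
def underlying (G : Digraph V) : SimpleGraph V where
  Adj x y := G.Adj x y ∨ G.Adj y x
  symm := ⟨fun _ _ h => h.symm⟩
  loopless := ⟨fun x h => h.elim (G.loopless x) (G.loopless x)⟩

/-- The diameter: the maximum value of the distance function. -/
noncomputable def diameter (G : Digraph V) : ℕ :=
  sSup {n | ∃ x y : V, G.dist x y = n}

/-- The girth: the length of a shortest circuit. -/
noncomputable def girth (G : Digraph V) : ℕ :=
  sInf {n | 0 < n ∧ ∃ x : V, G.HasPath x x n}

/-- Number of out-neighbours `d⁺(x)`. -/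
noncomputable def outDeg (G : Digraph V) (x : V) : ℕ := Nat.card {y | G.Adj x y}

/-- Number of in-neighbours `d⁻(x)`. -/
noncomputable def inDeg (G : Digraph V) (x : V) : ℕ := Nat.card {y | G.Adj y x}

def IsIsomorphicTo (G : Digraph V) (G' : Digraph V') : Prop :=
  ∃ e : V ≃ V', ∀ x y : V, G.Adj x y ↔ G'.Adj (e x) (e y)

/-- The Cartesian product of two digraphs. -/
def box (G : Digraph V) (G' : Digraph V') : Digraph (V × V') where
  Adj x y := (x.1 = y.1 ∧ G'.Adj x.2 y.2) ∨ (G.Adj x.1 y.1 ∧ x.2 = y.2)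
  loopless := fun v h => h.elim (fun h' => G'.loopless v.2 h'.2) (fun h' => G.loopless v.1 h'.1)

/-- Two digraphs have the same intersection numbers. -/
def SameIntersectionNumbers (G : Digraph V) (G' : Digraph V') : Prop :=
  G.tdSet = G'.tdSet ∧
    ∀ h i j : ℕ × ℕ, h ∈ G.tdSet → i ∈ G.tdSet → j ∈ G.tdSet → G.p h i j = G'.p h i j

/-- Induced subdigraph on a set of vertices. -/
def induce (G : Digraph V) (s : Set V) : Digraph s where
  Adj x y := G.Adj x.1 y.1
  loopless := fun v h => G.loopless v.1 h

end Digraph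

/-- The Cartesian product of a family of digraphs. -/
def piBox {ι : Type*} {W : ι → Type*} (G : ∀ i, Digraph (W i)) : Digraph (∀ i, W i) where
  Adj x y := ∃ i, (G i).Adj (x i) (y i) ∧ ∀ j, j ≠ i → x j = y j
  loopless := by
    rintro v ⟨i, hi, -⟩
    exact (G i).loopless _ hi

/-- The Cayley digraph `Cay(A,S)` of an additive group (for `S ⊆ A ∖ {0}`). -/
def Cay (A : Type*) [AddGroup A] (S : Set A) : Digraph A where
  Adj x y := x ≠ y ∧ y - x ∈ S
  loopless := fun _ h => h.1 rfl

/-- The Cayley graph of an additive group with respect to a symmetric connection set. -/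
def cayleyGraph (A : Type*) [AddGroup A] (S : Set A) : SimpleGraph A where
  Adj x y := x ≠ y ∧ (y - x ∈ S ∨ x - y ∈ S)
  symm := ⟨fun _ _ h => ⟨h.1.symm, h.2.symm⟩⟩
  loopless := ⟨fun _ h => h.1 rfl⟩

/-- The Hamming graph `H(ι, S)`: vertices are tuples, adjacent iff they differ in
exactly one coordinate. -/
def hammingGraph (ι : Type*) (S : Type*) : SimpleGraph (ι → S) where
  Adj x y := ∃ i, x i ≠ y i ∧ ∀ j, j ≠ i → x j = y j
  symm := by
    constructor
    rintro x y ⟨i, h1, h2⟩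
    exact ⟨i, h1.symm, fun j hj => (h2 j hj).symm⟩
  loopless := by
    constructor
    rintro x ⟨i, h1, -⟩
    exact h1 rfl

/-- The folded `n`-cube: vertices are `(n-1)`-tuples over `ℤ₂`, adjacent iff they
differ in exactly one coordinate or in all `n-1` coordinates. -/
def foldedCube (n : ℕ) : SimpleGraph (Fin (n - 1) → ZMod 2) where
  Adj x y := (∃ i, x i ≠ y i ∧ ∀ j, j ≠ i → x j = y j) ∨ (x ≠ y ∧ ∀ j, x j ≠ y j)
  symm := by
    constructor
    rintro x y (⟨i, h1, h2⟩ | ⟨h1, h2⟩)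
    · exact Or.inl ⟨i, h1.symm, fun j hj => (h2 j hj).symm⟩
    · exact Or.inr ⟨h1.symm, fun j => (h2 j).symm⟩
  loopless := by
    constructor
    rintro x (⟨i, h1, -⟩ | ⟨h1, -⟩)
    · exact h1 rfl
    · exact h1 rfl

/-- The Cartesian product of a family of simple graphs. -/
def piBoxGraph {ι : Type*} {W : ι → Type*} (G : ∀ i, SimpleGraph (W i)) :
    SimpleGraph (∀ i, W i) where
  Adj x y := ∃ i, (G i).Adj (x i) (y i) ∧ ∀ j, j ≠ i → x j = y j
  symm := by
    constructor
    rintro x y ⟨i, h1, h2⟩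
    exact ⟨i, (G i).adj_symm h1, fun j hj => (h2 j hj).symm⟩
  loopless := by
    constructor
    rintro x ⟨i, h1, -⟩
    exact (G i).loopless.irrefl _ h1

/-- The Shrikhande graph `Cay(ℤ₄ × ℤ₄, {±(1,0), ±(0,1), ±(1,1)})`. -/
def shrikhande : SimpleGraph (ZMod 4 × ZMod 4) :=
  cayleyGraph (ZMod 4 × ZMod 4) {(1, 0), (-1, 0), (0, 1), (0, -1), (1, 1), (-1, -1)}

/-- The Doob graph `G(d₁, d₂)`: the Cartesian product of `d₁` copies of the
Shrikhande graph with the Hamming graph `H(d₂, 4)`. -/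
def doobGraph (d₁ d₂ : ℕ) :
    SimpleGraph ((Fin d₁ → ZMod 4 × ZMod 4) × (Fin d₂ → ZMod 4)) :=
  (piBoxGraph fun _ : Fin d₁ => shrikhande).boxProd (hammingGraph (Fin d₂) (ZMod 4))

/-- `c_i(x,y)`: the number of neighbours of `y` at distance `i - 1` from `x`. -/
noncomputable def cNum (G : SimpleGraph V) (i : ℕ) (x y : V) : ℕ :=
  Nat.card {z : V | G.Adj y z ∧ G.dist x z = i - 1}

/-- `a_i(x,y)`: the number of neighbours of `y` at distance `i` from `x`. -/
noncomputable def aNum (G : SimpleGraph V) (i : ℕ) (x y : V) : ℕ :=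
  Nat.card {z : V | G.Adj y z ∧ G.dist x z = i}

/-- `b_i(x,y)`: the number of neighbours of `y` at distance `i + 1` from `x`. -/
noncomputable def bNum (G : SimpleGraph V) (i : ℕ) (x y : V) : ℕ :=
  Nat.card {z : V | G.Adj y z ∧ G.dist x z = i + 1}

/-- A distance-regular graph. -/
def IsDRG (G : SimpleGraph V) : Prop :=
  G.Connected ∧
    ∀ (i : ℕ) (x y x' y' : V), G.dist x y = i → G.dist x' y' = i →
      cNum G i x y = cNum G i x' y' ∧ bNum G i x y = bNum G i x' y'

/-- A distance-transitive graph. -/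
def IsDistanceTransitive (G : SimpleGraph V) : Prop :=
  G.Connected ∧
    ∀ x y x' y' : V, G.dist x y = G.dist x' y' → ∃ σ : G ≃g G, σ x = x' ∧ σ y = y'

/-- The vertex set of `Γ_i(α)`: all tuples obtained from `α` by inserting an
arbitrary element of `S` in the `i`-th coordinate. -/
def lineSet {n : ℕ} {S : Type*} (i : Fin (n + 1)) (α : Fin n → S) : Set (Fin (n + 1) → S) :=
  Set.range fun b : S => i.insertNth b α

/-- The induced subdigraph `Γ_i(α)`. -/
def Digraph.line {n : ℕ} {S : Type*} (Γ : Digraph (Fin (n + 1) → S)) (i : Fin (n + 1))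
    (α : Fin n → S) : Digraph (lineSet i α) :=
  Γ.induce (lineSet i α)

/-- Pad a tuple of length `m` with the entry `o` to a tuple of length `d`. -/
def pad {S : Type*} (o : S) (d m : ℕ) (α : Fin m → S) : Fin d → S :=
  fun j => if h : j.1 < m then α ⟨j.1, h⟩ else o

/-- The digraph `Γ^{[m]}` on `S^m`: `(α,β)` is an arc iff the padded tuples form
an arc of `Γ`. -/
def Digraph.trunc {S : Type*} {d : ℕ} (Γ : Digraph (Fin d → S)) (o : S) (m : ℕ) :
    Digraph (Fin m → S) where
  Adj α β := Γ.Adj (pad o d m α) (pad o d m β)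
  loopless := fun _ h => Γ.loopless _ h

/-- The digraph `Γ^i` on `S`: `(a,b)` is an arc iff the tuples with `a` resp. `b`
in the `i`-th coordinate and `o` elsewhere form an arc of `Γ`. -/
def Digraph.coordDigraph {S : Type*} {d : ℕ} (Γ : Digraph (Fin d → S)) (o : S) (i : Fin d) :
    Digraph S where
  Adj a b := Γ.Adj (Function.update (fun _ => o) i a) (Function.update (fun _ => o) i b)
  loopless := fun _ h => Γ.loopless _ h

/-- The set `T = S^{m-1} × {(o,…,o)}` (as a subset of `S^{d-1}`, here `d = n+1`). -/
def Tset {n : ℕ} (S : Type*) (o : S) (m : ℕ) : Set (Fin n → S) :=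
  {α | ∀ j : Fin n, m - 1 ≤ j.1 → α j = o}

end Paper


/-!
Two distinct vertices `u, v` of a line `Γᵢ(α)` are adjacent in `Σ` (the line is a line of the
Hamming graph underlying `Γ^{[m]}`), and since `a₁ = q - 2` their common neighbours are exactly
the other vertices of the line. Hence, for `c` ranging over the
line, the conditions `u → c` and `c → v` are obtained from each other by swapping the pair
`(∂̃(u,c), ∂̃(c,v))`, and commutativity gives `d⁺(u) = d⁻(v)` inside the line. A third vertex
`w` would force `d⁺(x) = d⁻(w) = d⁺(y)`; so `q = 2`, the line is `{x, y}`, `x → y ↛ x`, and `Σ`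
is triangle-free.

For a pair at distance 2 in `Σ`, commutativity either fixes or exchanges its two common
neighbours (`c₂ = 2`) while swapping their two-way distances to the pair. With this, if
`∂(y,x) = t ≥ 4`, every `(1,t)`-out-neighbour `v` of `y` yields a second common neighbour of `x`
and `v`, which is a `(1,t)`-out-neighbour of `x` other than `y`, and different `v` yield
different ones. So `y` has fewer `(1,t)`-out-neighbours than `x`, which weak
distance-regularity forbids. Triangle-freeness excludes `t ≤ 2`, so `t = 3`, and on a shortest
path `y → z → w → x` the vertex `z` lies in `P_{(2,2),(3,1)}(x,y)`.
-/

namespace Paper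

lemma natCard_setOf_swap {α β : Type*} [Finite α] (f : α → β × β)
    (h : ∀ a b, Nat.card {c | f c = (a, b)} = Nat.card {c | f c = (b, a)})
    (R : β × β → Prop) :
    Nat.card {c | R (f c)} = Nat.card {c | R (f c).swap} := by
  classical
  have := Fintype.ofFinite α
  simp only [Set.coe_ofPred, Nat.card_eq_fintype_card, Fintype.card_subtype] at h ⊢
  set M := Finset.univ.val.map f
  have hM : M.map Prod.swap = M := by
    ext ⟨a, b⟩
    rw [← Prod.swap_swap (a, b), Multiset.count_map_eq_count' _ _ Prod.swap_injective]
    simp only [M, Multiset.count_map, Prod.swap_prod_mk, @eq_comm _ (a, b), @eq_comm _ (b, a)]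
    exact h b a
  calc (Finset.univ.filter fun c => R (f c)).card = (M.filter R).card := by
        rw [Multiset.filter_map, Multiset.card_map]; rfl
    _ = ((M.map Prod.swap).filter R).card := by rw [hM]
    _ = (Finset.univ.filter fun c => R (f c).swap).card := by
        rw [Multiset.map_map, Multiset.filter_map, Multiset.card_map]; rfl

namespace Digraph

variable {V : Type*} (G : Digraph V)

lemma hasPath_zero_iff {x y : V} : G.HasPath x y 0 ↔ x = y := by
  constructor
  · rintro ⟨f, rfl, rfl, -⟩
    rfl
  · rintro rfl
    exact ⟨fun _ => x, rfl, rfl, fun k hk => absurd hk k.not_lt_zero⟩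

lemma hasPath_succ_iff {x y : V} {n : ℕ} :
    G.HasPath x y (n + 1) ↔ ∃ z, G.Adj x z ∧ G.HasPath z y n := by
  constructor
  · rintro ⟨f, rfl, rfl, hf⟩
    exact ⟨f 1, hf 0 n.succ_pos, fun k => f (k + 1), rfl, rfl,
      fun k hk => hf (k + 1) (by omega)⟩
  · rintro ⟨z, hxz, f, rfl, rfl, hf⟩
    refine ⟨fun k => if k = 0 then x else f (k - 1), rfl, by simp, fun k hk => ?_⟩
    rcases k with _ | k
    · simpa using hxz
    · simpa using hf k (by omega)

lemma hasPath_one {x y : V} (h : G.Adj x y) : G.HasPath x y 1 :=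
  G.hasPath_succ_iff.2 ⟨y, h, G.hasPath_zero_iff.2 rfl⟩

lemma HasPath.append {G : Digraph V} {x y z : V} {m n : ℕ} (hxy : G.HasPath x y m)
    (hyz : G.HasPath y z n) : G.HasPath x z (m + n) := by
  induction m generalizing x with
  | zero =>
    obtain rfl := G.hasPath_zero_iff.1 hxy
    simpa using hyz
  | succ m ih =>
    obtain ⟨w, hxw, hwy⟩ := G.hasPath_succ_iff.1 hxy
    rw [Nat.add_right_comm]
    exact G.hasPath_succ_iff.2 ⟨w, hxw, ih hwy⟩

lemma dist_le {x y : V} {n : ℕ} (h : G.HasPath x y n) : G.dist x y ≤ n :=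
  Nat.sInf_le h

lemma hasPath_dist {x y : V} (h : ∃ n, G.HasPath x y n) : G.HasPath x y (G.dist x y) :=
  Nat.sInf_mem h

lemma dist_self (x : V) : G.dist x x = 0 :=
  Nat.le_zero.1 (G.dist_le (G.hasPath_zero_iff.2 rfl))

lemma dist_le_two {x y z : V} (hxy : G.Adj x y) (hyz : G.Adj y z) : G.dist x z ≤ 2 :=
  G.dist_le ((G.hasPath_one hxy).append (G.hasPath_one hyz))

lemma dist_eq_one_iff {x y : V} : G.dist x y = 1 ↔ G.Adj x y := by
  constructor
  · intro h
    have hne : {n | G.HasPath x y n}.Nonempty := by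
      by_contra hempty
      rw [Set.not_nonempty_iff_eq_empty] at hempty
      simp [dist, hempty] at h
    have hpath : G.HasPath x y 1 := h ▸ G.hasPath_dist hne
    obtain ⟨z, hxz, hzy⟩ := G.hasPath_succ_iff.1 hpath
    rwa [← G.hasPath_zero_iff.1 hzy]
  · intro h
    have hpos : G.dist x y ≠ 0 := by
      intro h0
      have hpath : G.HasPath x y 0 := h0 ▸ G.hasPath_dist ⟨1, G.hasPath_one h⟩
      exact G.loopless x (G.hasPath_zero_iff.1 hpath ▸ h)
    have := G.dist_le (G.hasPath_one h)
    omega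

lemma underlying_adj_iff_tdist {x y : V} :
    G.underlying.Adj x y ↔ (G.tdist x y).1 = 1 ∨ (G.tdist x y).2 = 1 := by
  simp only [underlying, tdist, dist_eq_one_iff]

lemma outDeg_induce (s : Set V) (x : s) :
    (G.induce s).outDeg x = Nat.card {c | c ∈ s ∧ G.Adj x c} :=
  Nat.card_congr (Equiv.subtypeSubtypeEquivSubtypeInter (· ∈ s) (G.Adj x))

lemma inDeg_induce (s : Set V) (x : s) :
    (G.induce s).inDeg x = Nat.card {c | c ∈ s ∧ G.Adj c x} :=
  Nat.card_congr (Equiv.subtypeSubtypeEquivSubtypeInter (· ∈ s) (G.Adj · x))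

lemma natCard_setOf_mem_pair_and_adj (x y : V) [Decidable (G.Adj x y)] :
    Nat.card {c | c ∈ ({x, y} : Set V) ∧ G.Adj x c} = if G.Adj x y then 1 else 0 := by
  split_ifs with h
  · have hset : {c | c ∈ ({x, y} : Set V) ∧ G.Adj x c} = {y} := by
      ext c
      constructor
      · rintro ⟨rfl | rfl, hc⟩
        exacts [absurd hc (G.loopless c), rfl]
      · rintro rfl
        exact ⟨Or.inr rfl, h⟩
    rw [hset, Nat.card_unique]
  · refine @Nat.card_of_isEmpty _ ⟨?_⟩
    rintro ⟨c, rfl | rfl, hc⟩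
    exacts [G.loopless c hc, h hc]

lemma adj_and_not_adj_of_outDeg_induce_lt {s : Set V} {x y : V} (hs : s = {x, y}) (hx : x ∈ s)
    (hy : y ∈ s) (hdeg : (G.induce s).outDeg ⟨y, hy⟩ < (G.induce s).outDeg ⟨x, hx⟩) :
    G.Adj x y ∧ ¬ G.Adj y x := by
  classical
  rw [outDeg_induce, outDeg_induce] at hdeg
  dsimp only at hdeg
  rw [hs, natCard_setOf_mem_pair_and_adj, Set.pair_comm, natCard_setOf_mem_pair_and_adj] at hdeg
  constructor
  · by_contra hxy
    rw [if_neg hxy] at hdeg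
    omega
  · intro hyx
    rw [if_pos hyx] at hdeg
    split_ifs at hdeg <;> omega

section StronglyConnected

variable {G} (hG : G.StronglyConnected)
include hG

lemma dist_eq_zero_iff {x y : V} : G.dist x y = 0 ↔ x = y := by
  constructor
  · intro h
    exact G.hasPath_zero_iff.1 (h ▸ G.hasPath_dist (hG x y))
  · rintro rfl
    exact G.dist_self x

lemma dist_triangle (x y z : V) : G.dist x z ≤ G.dist x y + G.dist y z :=
  G.dist_le ((G.hasPath_dist (hG x y)).append (G.hasPath_dist (hG y z)))

lemma exists_adj_dist_eq {x y : V} {n : ℕ} (h : G.dist x y = n + 1) :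
    ∃ z, G.Adj x z ∧ G.dist z y = n := by
  obtain ⟨z, hxz, hzy⟩ := G.hasPath_succ_iff.1 (h ▸ G.hasPath_dist (hG x y))
  refine ⟨z, hxz, le_antisymm (G.dist_le hzy) ?_⟩
  have := G.dist_le (G.hasPath_succ_iff.2 ⟨z, hxz, G.hasPath_dist (hG z y)⟩)
  omega

lemma mem_insert_insert_commonNeighbors_iff {u v c : V} :
    c ∈ insert u (insert v (G.underlying.commonNeighbors u v)) ↔
      G.dist u c = 0 ∨ G.dist c v = 0 ∨ (G.underlying.Adj u c ∧ G.underlying.Adj c v) := by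
  rw [dist_eq_zero_iff hG, dist_eq_zero_iff hG, Set.mem_insert_iff, Set.mem_insert_iff,
    SimpleGraph.mem_commonNeighbors, G.underlying.adj_comm v]
  tauto

end StronglyConnected

variable {G}

lemma underlying_adj_iff_of_tdist_eq {u v u' v' : V} (h : G.tdist u v = G.tdist u' v') :
    G.underlying.Adj u v ↔ G.underlying.Adj u' v' := by
  rw [underlying_adj_iff_tdist, underlying_adj_iff_tdist, h]

lemma P_eq_empty {i j : ℕ × ℕ} (h : ¬ (i ∈ G.tdSet ∧ j ∈ G.tdSet)) (x y : V) :
    G.P i j x y = ∅ :=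
  Set.eq_empty_of_forall_notMem fun z hz => h ⟨⟨x, z, hz.1⟩, z, y, hz.2⟩

lemma natCard_setOf_tdist_eq_congr_left (hwdr : G.IsWDR) (h : ℕ × ℕ) (u u' : V) :
    Nat.card {c | G.tdist u c = h} = Nat.card {c | G.tdist u' c = h} := by
  have key : ∀ w, {c | G.tdist w c = h} = G.P h h.swap w w := fun w => by
    ext c
    exact ⟨fun hc => ⟨hc, hc ▸ rfl⟩, And.left⟩
  rw [key, key, hwdr.2, hwdr.2, tdist, tdist, dist_self, dist_self]

section Commutative

variable (hwdr : G.IsWDR) (hcomm : G.IsCommutative)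
include hwdr hcomm

lemma natCard_P_comm (i j : ℕ × ℕ) (x y : V) :
    Nat.card (G.P i j x y) = Nat.card (G.P j i x y) := by
  by_cases hij : i ∈ G.tdSet ∧ j ∈ G.tdSet
  · rw [hwdr.2, hwdr.2, hcomm _ _ _ ⟨x, y, rfl⟩ hij.1 hij.2]
  · rw [P_eq_empty hij, P_eq_empty (by tauto)]

variable [Finite V]

lemma P_nonempty_comm {i j : ℕ × ℕ} {x y : V} (h : (G.P i j x y).Nonempty) :
    (G.P j i x y).Nonempty := by
  rw [← Set.ncard_pos (Set.toFinite _), ← Nat.card_coe_set_eq] at h ⊢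
  rwa [← natCard_P_comm hwdr hcomm]

lemma natCard_setOf_tdist_comm (R : ℕ × ℕ → ℕ × ℕ → Prop) (x y : V) :
    Nat.card {z | R (G.tdist x z) (G.tdist z y)} =
      Nat.card {z | R (G.tdist z y) (G.tdist x z)} :=
  natCard_setOf_swap (fun z => (G.tdist x z, G.tdist z y))
    (fun i j => by simpa only [P, Prod.mk.injEq] using natCard_P_comm hwdr hcomm i j x y)
    (fun p => R p.1 p.2)

lemma tdist_eq_of_commonNeighbors_eq_pair {x y a b : V}
    (h : G.underlying.commonNeighbors x y = {a, b}) :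
    G.tdist x a = G.tdist a y ∨ (G.tdist x a = G.tdist b y ∧ G.tdist a y = G.tdist x b) := by
  have ha : a ∈ G.underlying.commonNeighbors x y := h ▸ Set.mem_insert a {b}
  obtain ⟨r, hxr, hry⟩ := P_nonempty_comm hwdr hcomm
    (⟨a, rfl, rfl⟩ : (G.P (G.tdist x a) (G.tdist a y) x y).Nonempty)
  have hr : r ∈ G.underlying.commonNeighbors x y :=
    ⟨(underlying_adj_iff_of_tdist_eq hxr).2 ha.2.symm,
      ((underlying_adj_iff_of_tdist_eq hry).2 ha.1).symm⟩
  rw [h] at hr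
  rcases hr with rfl | rfl
  · exact Or.inl hry.symm
  · exact Or.inr ⟨hry.symm, hxr.symm⟩

end Commutative

end Digraph

section SimpleGraph

open SimpleGraph

variable {V : Type*} {G : SimpleGraph V} {u v w a b : V}

lemma setOf_adj_dist_eq_one (x y : V) :
    {z | G.Adj y z ∧ G.dist x z = 1} = G.commonNeighbors x y := by
  ext z
  simp only [Set.mem_ofPred_eq, dist_eq_one_iff_adj, mem_commonNeighbors]
  tauto

lemma aNum_one_eq_ncard (x y : V) : aNum G 1 x y = (G.commonNeighbors x y).ncard := by
  rw [aNum, setOf_adj_dist_eq_one, Nat.card_coe_set_eq]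

lemma cNum_two_eq_ncard (x y : V) : cNum G 2 x y = (G.commonNeighbors x y).ncard := by
  rw [cNum, Nat.add_one_sub_one, setOf_adj_dist_eq_one, Nat.card_coe_set_eq]

lemma cliqueFree_three_of_aNum_one_eq_zero [Finite V]
    (h : ∀ x y, G.dist x y = 1 → aNum G 1 x y = 0) : G.CliqueFree 3 := by
  classical
  intro s hs
  obtain ⟨a, b, c, hab, hac, hbc, rfl⟩ := is3Clique_iff.1 hs
  have hcn := h a b (dist_eq_one_iff_adj.2 hab)
  rw [aNum_one_eq_ncard, Set.ncard_eq_zero (Set.toFinite _)] at hcn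
  exact hcn.subset ⟨hac, hbc⟩

lemma not_adj_of_cliqueFree_three (h : G.CliqueFree 3) (hab : G.Adj a b) (hac : G.Adj a c) :
    ¬ G.Adj b c :=
  fun hbc => by classical exact h {a, b, c} (is3Clique_triple_iff.2 ⟨hab, hac, hbc⟩)

lemma dist_eq_two_of_cliqueFree_three (h : G.CliqueFree 3) (hne : u ≠ v) (huw : G.Adj u w)
    (hwv : G.Adj w v) : G.dist u v = 2 := by
  have : G.edist u v = 2 := edist_eq_two_iff.2
    ⟨hne, not_adj_of_cliqueFree_three h huw.symm hwv, w, huw, hwv.symm⟩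
  simp [SimpleGraph.dist, this]

section CommonNeighbors

variable [Finite V] (hc2 : ∀ x y, G.dist x y = 2 → cNum G 2 x y = 2) (huv : G.dist u v = 2)
include hc2 huv

lemma commonNeighbors_eq_pair (ha : a ∈ G.commonNeighbors u v) (hb : b ∈ G.commonNeighbors u v)
    (hab : a ≠ b) : G.commonNeighbors u v = {a, b} :=
  (Set.eq_of_subset_of_ncard_le (Set.insert_subset ha (Set.singleton_subset_iff.2 hb))
    (by rw [← cNum_two_eq_ncard, hc2 u v huv, Set.ncard_pair hab]) (Set.toFinite _)).symm

lemma exists_commonNeighbors_eq_pair (ha : a ∈ G.commonNeighbors u v) :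
    ∃ b, b ≠ a ∧ G.commonNeighbors u v = {a, b} := by
  have hcard : (G.commonNeighbors u v \ {a}).ncard = 1 := by
    rw [Set.ncard_sdiff_singleton_of_mem ha, ← cNum_two_eq_ncard, hc2 u v huv]
  obtain ⟨b, hb⟩ := Set.ncard_eq_one.1 hcard
  have hb' : b ∈ G.commonNeighbors u v \ {a} := hb ▸ rfl
  exact ⟨b, hb'.2, commonNeighbors_eq_pair hc2 huv ha hb'.1 (Ne.symm hb'.2)⟩

end CommonNeighbors

end SimpleGraph

namespace Digraph

section TriangleFree

variable {V : Type*} [Finite V] {G : Digraph V} (hwdr : G.IsWDR) (hcomm : G.IsCommutative)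
  (htf : G.underlying.CliqueFree 3)
  (hc2 : ∀ x y, G.underlying.dist x y = 2 → cNum G.underlying 2 x y = 2)
include hwdr hcomm htf hc2

lemma exists_tdist_eq_of_tdist_eq {t : ℕ} (ht : 4 ≤ t) {x y v : V}
    (hxy : G.tdist x y = (1, t)) (hyv : G.tdist y v = (1, t)) :
    ∃ p, p ≠ y ∧ G.tdist x p = (1, t) ∧ G.underlying.Adj p v := by
  have hsc := hwdr.1
  have hxy' : G.Adj x y := G.dist_eq_one_iff.1 (congrArg Prod.fst hxy)
  have hyv' : G.Adj y v := G.dist_eq_one_iff.1 (congrArg Prod.fst hyv)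
  have hvx : 3 ≤ G.dist v x := by
    have := dist_triangle hsc y v x
    have hyx : G.dist y x = t := congrArg Prod.snd hxy
    have hyv₁ : G.dist y v = 1 := congrArg Prod.fst hyv
    omega
  have hxv : x ≠ v := by
    rintro rfl
    rw [dist_self] at hvx
    omega
  have hd : G.underlying.dist x v = 2 :=
    dist_eq_two_of_cliqueFree_three htf hxv (Or.inl hxy') (Or.inl hyv')
  obtain ⟨c, hcy, hcn⟩ := exists_commonNeighbors_eq_pair hc2 hd
    (⟨Or.inl hxy', Or.inr hyv'⟩ : y ∈ G.underlying.commonNeighbors x v)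
  have hc : c ∈ G.underlying.commonNeighbors x v := hcn ▸ Set.mem_insert_of_mem y rfl
  refine ⟨c, hcy, ?_, hc.2.symm⟩
  rcases tdist_eq_of_commonNeighbors_eq_pair hwdr hcomm (hcn.trans (Set.pair_comm y c)) with
    hκ | ⟨hκ, -⟩
  · rcases (underlying_adj_iff_tdist G).1 hc.1 with hxc | hcx
    · have hxc' : G.Adj x c := G.dist_eq_one_iff.1 hxc
      have hcv : G.Adj c v := G.dist_eq_one_iff.1 ((congrArg Prod.fst hκ).symm.trans hxc)
      have hd' : G.underlying.dist y c = 2 :=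
        dist_eq_two_of_cliqueFree_three htf hcy.symm (Or.inr hxy') (Or.inl hxc')
      rcases tdist_eq_of_commonNeighbors_eq_pair hwdr hcomm (commonNeighbors_eq_pair hc2 hd'
        ⟨Or.inr hxy', Or.inr hxc'⟩ ⟨Or.inl hyv', Or.inl hcv⟩ hxv) with hyx | ⟨-, hxc⟩
      · have hyx₁ : G.dist y x = 1 := (congrArg Prod.fst hyx).trans hxc
        have hyxt : G.dist y x = t := congrArg Prod.snd hxy
        omega
      · exact hxc.trans hyv
    · have hcx' : G.Adj c x := G.dist_eq_one_iff.1 hcx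
      have hvc : G.Adj v c := G.dist_eq_one_iff.1 ((congrArg Prod.snd hκ).symm.trans hcx)
      have := G.dist_le_two hvc hcx'
      omega
  · exact hκ.trans hyv

lemma tdist_ne_of_four_le {t : ℕ} (ht : 4 ≤ t) (x y : V) : G.tdist x y ≠ (1, t) := by
  intro hxy
  have hxy' : G.Adj x y := G.dist_eq_one_iff.1 (congrArg Prod.fst hxy)
  have hyx : G.dist y x = t := congrArg Prod.snd hxy
  choose f hfy hfx hfv using fun v : {v | G.tdist y v = (1, t)} =>
    exists_tdist_eq_of_tdist_eq hwdr hcomm htf hc2 ht hxy v.2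
  let g : {v | G.tdist y v = (1, t)} → ({c | G.tdist x c = (1, t)} \ {y} : Set V) :=
    fun v => ⟨f v, hfx v, hfy v⟩
  have hg : Function.Injective g := by
    intro v w hvw
    have hf : f w = f v := congrArg Subtype.val hvw.symm
    have hyv : G.Adj y v := G.dist_eq_one_iff.1 (congrArg Prod.fst v.2)
    have hyw : G.Adj y w := G.dist_eq_one_iff.1 (congrArg Prod.fst w.2)
    have hxf : G.Adj x (f v) := G.dist_eq_one_iff.1 (congrArg Prod.fst (hfx v))
    have hxv : x ≠ v := by
      rintro hxv
      have : G.dist y x = 1 := hxv ▸ congrArg Prod.fst v.2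
      omega
    have hd : G.underlying.dist y (f v) = 2 :=
      dist_eq_two_of_cliqueFree_three htf (hfy v).symm (Or.inr hxy') (Or.inl hxf)
    have hw : w.1 ∈ G.underlying.commonNeighbors y (f v) := ⟨Or.inl hyw, hf ▸ hfv w⟩
    rw [commonNeighbors_eq_pair hc2 hd ⟨Or.inr hxy', Or.inr hxf⟩ ⟨Or.inl hyv, hfv v⟩
      hxv] at hw
    rcases hw with hwx | hwv
    · have : G.dist y x = 1 := hwx ▸ congrArg Prod.fst w.2
      omega
    · exact Subtype.ext (Set.mem_singleton_iff.1 hwv).symm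
  have hle := Nat.card_le_card_of_injective g hg
  rw [natCard_setOf_tdist_eq_congr_left hwdr _ y x, Nat.card_coe_set_eq, Nat.card_coe_set_eq,
    Set.ncard_sdiff_singleton_of_mem (s := {c | G.tdist x c = (1, t)}) hxy] at hle
  have hpos : 0 < {c | G.tdist x c = (1, t)}.ncard :=
    (Set.ncard_pos (Set.toFinite _)).2 ⟨y, hxy⟩
  omega

lemma dist_eq_three_of_adj_of_not_adj {x y : V} (hxy : G.Adj x y) (hyx : ¬ G.Adj y x) :
    G.dist y x = 3 := by
  have hsc := hwdr.1
  have h0 : G.dist y x ≠ 0 := by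
    intro h
    obtain rfl := (dist_eq_zero_iff hsc).1 h
    exact G.loopless y hxy
  have h1 : G.dist y x ≠ 1 := fun h => hyx (G.dist_eq_one_iff.1 h)
  have h2 : G.dist y x ≠ 2 := by
    intro h
    obtain ⟨c, hyc, hcx⟩ := exists_adj_dist_eq hsc (h : G.dist y x = 1 + 1)
    exact not_adj_of_cliqueFree_three htf (Or.inr hxy) (Or.inl hyc)
      (Or.inr (G.dist_eq_one_iff.1 hcx))
  have h4 : ¬ 4 ≤ G.dist y x := fun h =>
    tdist_ne_of_four_le hwdr hcomm htf hc2 h x y (Prod.ext (G.dist_eq_one_iff.2 hxy) rfl)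
  omega

lemma P_nonempty_of_tdist_eq {x y : V} (hxy : G.tdist x y = (1, 3)) :
    (G.P (2, 2) (3, 1) x y).Nonempty := by
  have hsc := hwdr.1
  have hxy' : G.Adj x y := G.dist_eq_one_iff.1 (congrArg Prod.fst hxy)
  have hyx : G.dist y x = 3 := congrArg Prod.snd hxy
  obtain ⟨z, hyz, hzx⟩ := exists_adj_dist_eq hsc (hyx : G.dist y x = 2 + 1)
  obtain ⟨w, hzw, hwx⟩ := exists_adj_dist_eq hsc (hzx : G.dist z x = 1 + 1)
  have hzx_ne : z ≠ x := by
    rintro rfl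
    rw [dist_self] at hzx
    omega
  have hxz_nadj : ¬ G.underlying.Adj x z :=
    not_adj_of_cliqueFree_three htf (Or.inr hxy') (Or.inl hyz)
  have hxz : G.dist x z = 2 := by
    have := G.dist_le_two hxy' hyz
    have h0 : G.dist x z ≠ 0 := fun h => hzx_ne ((dist_eq_zero_iff hsc).1 h).symm
    have h1 : G.dist x z ≠ 1 := fun h => hxz_nadj (Or.inl (G.dist_eq_one_iff.1 h))
    omega
  have hd : G.underlying.dist x z = 2 :=
    dist_eq_two_of_cliqueFree_three htf hzx_ne.symm (Or.inl hxy') (Or.inl hyz)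
  have hwy : y ≠ w := by
    rintro rfl
    omega
  rcases tdist_eq_of_commonNeighbors_eq_pair hwdr hcomm (commonNeighbors_eq_pair hc2 hd
    ⟨Or.inl hxy', Or.inr hyz⟩ ⟨Or.inr (G.dist_eq_one_iff.1 hwx), Or.inl hzw⟩ hwy) with h | ⟨h, -⟩
  · exact ⟨z, Prod.ext hxz hzx, Prod.ext (congrArg Prod.snd (hxy.symm.trans h)).symm
      (G.dist_eq_one_iff.2 hyz)⟩
  · have : G.dist z w = 3 := (congrArg Prod.snd (hxy.symm.trans h)).symm
    have := G.dist_eq_one_iff.2 hzw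
    omega

end TriangleFree

end Digraph

section Line

variable {S : Type*} {n : ℕ} {o : S} {m : ℕ} {i : Fin (n + 1)} {α : Fin n → S}

lemma insertNth_apply_of_le (hi : i.1 < m) (hα : α ∈ Tset S o m) (b : S) {j : Fin (n + 1)}
    (hj : m ≤ j.1) : (i.insertNth b α : Fin (n + 1) → S) j = o := by
  obtain ⟨j, rfl⟩ := Fin.exists_succAbove_eq (show j ≠ i by rintro rfl; omega)
  rw [Fin.insertNth_apply_succAbove]
  refine hα j ?_
  revert hj
  unfold Fin.succAbove
  split <;> simp only [Fin.val_castSucc, Fin.val_succ] <;> omega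

lemma pad_castLE {d : ℕ} (hmd : m ≤ d) {x : Fin d → S} (hx : ∀ j : Fin d, m ≤ j.1 → x j = o) :
    pad o d m (fun k => x (Fin.castLE hmd k)) = x := by
  funext j
  unfold pad
  split_ifs with h
  · rfl
  · exact (hx j (not_lt.1 h)).symm

lemma trunc_underlying_adj_iff {d : ℕ} (Γ : Digraph (Fin d → S)) (hmd : m ≤ d)
    {x y : Fin d → S} (hx : ∀ j : Fin d, m ≤ j.1 → x j = o)
    (hy : ∀ j : Fin d, m ≤ j.1 → y j = o) :
    (Γ.trunc o m).underlying.Adj (fun k => x (Fin.castLE hmd k)) (fun k => y (Fin.castLE hmd k))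
      ↔ Γ.underlying.Adj x y := by
  change Γ.Adj (pad o d m _) (pad o d m _) ∨ Γ.Adj (pad o d m _) (pad o d m _) ↔
    Γ.Adj x y ∨ Γ.Adj y x
  rw [pad_castLE hmd hx, pad_castLE hmd hy]

lemma natCard_lineSet : Nat.card (lineSet i α) = Nat.card S :=
  (Nat.card_congr (Equiv.ofInjective (fun b : S => (i.insertNth b α : Fin (n + 1) → S))
    (Fin.insertNth_left_injective (α := fun _ => S) α))).symm

variable {Γ : Digraph (Fin (n + 1) → S)} (hmd : m ≤ n + 1) (hi : i.1 < m)
  (hham : (Γ.trunc o m).underlying = hammingGraph (Fin m) S) (hα : α ∈ Tset S o m)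
include hmd hi hham hα

lemma underlying_adj_of_mem_lineSet {u v : Fin (n + 1) → S} (hu : u ∈ lineSet i α)
    (hv : v ∈ lineSet i α) (huv : u ≠ v) : Γ.underlying.Adj u v := by
  obtain ⟨b, rfl⟩ := hu
  obtain ⟨c, rfl⟩ := hv
  rw [← trunc_underlying_adj_iff Γ hmd (fun _ => insertNth_apply_of_le hi hα b)
    (fun _ => insertNth_apply_of_le hi hα c), hham]
  refine ⟨⟨i, hi⟩, ?_, fun k hk => ?_⟩
  · change (i.insertNth b α : Fin (n + 1) → S) i ≠ (i.insertNth c α : Fin (n + 1) → S) i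
    simpa using fun h : b = c => huv (h ▸ rfl)
  · obtain ⟨j, hj⟩ := Fin.exists_succAbove_eq (x := Fin.castLE hmd k) (y := i)
      fun h => hk (Fin.ext (by simpa using congrArg Fin.val h))
    simp only [← hj, Fin.insertNth_apply_succAbove]

lemma lineSet_eq_insert_insert_commonNeighbors [Finite S]
    (ha1 : ∀ x y, Γ.underlying.dist x y = 1 → aNum Γ.underlying 1 x y = Nat.card S - 2)
    {u v : Fin (n + 1) → S} (hu : u ∈ lineSet i α) (hv : v ∈ lineSet i α) (huv : u ≠ v) :
    lineSet i α = insert u (insert v (Γ.underlying.commonNeighbors u v)) := by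
  have hadj : ∀ {a b}, a ∈ lineSet i α → b ∈ lineSet i α → a ≠ b → Γ.underlying.Adj a b :=
    underlying_adj_of_mem_lineSet hmd hi hham hα
  have hsub : lineSet i α \ {u, v} ⊆ Γ.underlying.commonNeighbors u v := by
    rintro z ⟨hz, hzuv⟩
    simp only [Set.mem_insert_iff, Set.mem_singleton_iff, not_or] at hzuv
    exact ⟨hadj hu hz (Ne.symm hzuv.1), hadj hv hz (Ne.symm hzuv.2)⟩
  have hcard : (Γ.underlying.commonNeighbors u v).ncard ≤ (lineSet i α \ {u, v}).ncard := by
    rw [← aNum_one_eq_ncard, ha1 u v (SimpleGraph.dist_eq_one_iff_adj.2 (hadj hu hv huv)),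
      Set.ncard_sdiff (Set.insert_subset hu (Set.singleton_subset_iff.2 hv)), Set.ncard_pair huv,
      ← Nat.card_coe_set_eq, natCard_lineSet]
  rw [← Set.eq_of_subset_of_ncard_le hsub hcard (Set.toFinite _)]
  ext c
  simp only [Set.mem_insert_iff, Set.mem_sdiff, Set.mem_singleton_iff]
  constructor
  · tauto
  · rintro (rfl | rfl | ⟨h, -⟩) <;> assumption

end Line

section LineDegree

variable {S : Type*} [Finite S] {n : ℕ} {o : S} {m : ℕ} {i : Fin (n + 1)} {α : Fin n → S}
  {Γ : Digraph (Fin (n + 1) → S)} (hwdr : Γ.IsWDR) (hcomm : Γ.IsCommutative)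
  (ha1 : ∀ x y, Γ.underlying.dist x y = 1 → aNum Γ.underlying 1 x y = Nat.card S - 2)
  (hmd : m ≤ n + 1) (hi : i.1 < m)
  (hham : (Γ.trunc o m).underlying = hammingGraph (Fin m) S) (hα : α ∈ Tset S o m)
include hwdr hcomm ha1 hmd hi hham hα

lemma outDeg_line_eq_inDeg_line {u v : Fin (n + 1) → S} (hu : u ∈ lineSet i α)
    (hv : v ∈ lineSet i α) (huv : u ≠ v) :
    (Γ.line i α).outDeg ⟨u, hu⟩ = (Γ.line i α).inDeg ⟨v, hv⟩ := by
  rw [Digraph.line, Digraph.outDeg_induce, Digraph.inDeg_induce]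
  dsimp only
  rw [lineSet_eq_insert_insert_commonNeighbors hmd hi hham hα ha1 hu hv huv]
  -- `c ∈ line` is a swap-symmetric condition on `(∂̃(u,c), ∂̃(c,v))`, and the swap exchanges
  -- `u → c` with `c → v`
  have key := Digraph.natCard_setOf_tdist_comm hwdr hcomm (fun κ μ =>
    (κ.1 = 0 ∨ μ.1 = 0 ∨ ((κ.1 = 1 ∨ κ.2 = 1) ∧ (μ.1 = 1 ∨ μ.2 = 1))) ∧ κ.1 = 1) u v
  simp only [Digraph.mem_insert_insert_commonNeighbors_iff hwdr.1,
    Digraph.underlying_adj_iff_tdist, ← Digraph.dist_eq_one_iff]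
  simp only [Digraph.tdist] at key ⊢
  convert key using 3
  ext c
  simp only [Set.mem_ofPred_eq]
  tauto

lemma natCard_le_two_of_outDeg_line_lt {x y : Fin (n + 1) → S} (hx : x ∈ lineSet i α)
    (hy : y ∈ lineSet i α) (hdeg : (Γ.line i α).outDeg ⟨y, hy⟩ < (Γ.line i α).outDeg ⟨x, hx⟩) :
    Nat.card S ≤ 2 := by
  by_contra! hS
  have hxy : x ≠ y := by
    rintro rfl
    exact lt_irrefl _ hdeg
  obtain ⟨w, hw, hwxy⟩ : (lineSet i α \ {x, y}).Nonempty := by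
    rw [← Set.ncard_pos (Set.toFinite _),
      Set.ncard_sdiff (Set.insert_subset hx (Set.singleton_subset_iff.2 hy)), Set.ncard_pair hxy,
      ← Nat.card_coe_set_eq, natCard_lineSet]
    omega
  simp only [Set.mem_insert_iff, Set.mem_singleton_iff, not_or] at hwxy
  have hxw := outDeg_line_eq_inDeg_line hwdr hcomm ha1 hmd hi hham hα hx hw (Ne.symm hwxy.1)
  have hyw := outDeg_line_eq_inDeg_line hwdr hcomm ha1 hmd hi hham hα hy hw (Ne.symm hwxy.2)
  omega

end LineDegree

end Paper

open Paper in
theorem lemma_p_eq_four_general {S : Type*} [Finite S] {n : ℕ}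
    (Γ : Paper.Digraph (Fin (n + 1) → S)) (q : ℕ) (hq : q = Nat.card S)
    (hwdr : Γ.IsWDR) (hcomm : Γ.IsCommutative)
    (ha1 : ∀ x y, Γ.underlying.dist x y = 1 → aNum Γ.underlying 1 x y = q - 2)
    (hc2 : ∀ x y, Γ.underlying.dist x y = 2 → cNum Γ.underlying 2 x y = 2)
    (o : S) (m : ℕ) (hmd : m ≤ n + 1)
    (hham : (Γ.trunc o m).underlying = hammingGraph (Fin m) S)
    (i : Fin (n + 1)) (hi : i.1 < m)
    (α : Fin n → S) (hα : α ∈ Tset S o m)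
    (x y : Fin (n + 1) → S) (hx : x ∈ lineSet i α) (hy : y ∈ lineSet i α)
    (hdeg : (Γ.line i α).outDeg ⟨y, hy⟩ < (Γ.line i α).outDeg ⟨x, hx⟩) :
    Γ.tdist x y = (1, 3) ∧ Γ.p (1, 3) (2, 2) (3, 1) ≠ 0 := by
  classical
  subst hq
  have hxy : x ≠ y := by
    rintro rfl
    exact lt_irrefl _ hdeg
  have hline : lineSet i α = {x, y} := by
    refine (Set.eq_of_subset_of_ncard_le (Set.insert_subset hx (Set.singleton_subset_iff.2 hy))
      ?_ (Set.toFinite _)).symm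
    rw [Set.ncard_pair hxy, ← Nat.card_coe_set_eq, natCard_lineSet]
    exact natCard_le_two_of_outDeg_line_lt hwdr hcomm ha1 hmd hi hham hα hx hy hdeg
  have hS : Nat.card S = 2 := by
    rw [← natCard_lineSet (i := i) (α := α), Nat.card_coe_set_eq, hline, Set.ncard_pair hxy]
  rw [hS] at ha1
  have htf := cliqueFree_three_of_aNum_one_eq_zero ha1
  obtain ⟨hxy', hyx'⟩ := Γ.adj_and_not_adj_of_outDeg_induce_lt hline hx hy hdeg
  have hdist : Γ.tdist x y = (1, 3) := Prod.ext (Γ.dist_eq_one_iff.2 hxy')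
    (Digraph.dist_eq_three_of_adj_of_not_adj hwdr hcomm htf hc2 hxy' hyx')
  refine ⟨hdist, ?_⟩
  rw [← hdist, ← hwdr.2, Nat.card_coe_set_eq]
  exact ((Set.ncard_pos (Set.toFinite _)).2
    (Digraph.P_nonempty_of_tdist_eq hwdr hcomm htf hc2 hdist)).ne'

open Paper in
/-- **Lemma 3.11.** If `x,y ∈ V(Γᵢ(α))` and `d⁺_{Γᵢ(α)}(x) > d⁺_{Γᵢ(α)}(y)`,
then `(x,y) ∈ Γ_{1,3}` and `p^{(1,3)}_{(2,2),(3,1)} ≠ 0`. -/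
theorem lemma_p_eq_four {S : Type*} [Finite S] {n : ℕ}
    (Γ : Paper.Digraph (Fin (n + 1) → S)) (q : ℕ) (hq : q = Nat.card S)
    (hwdr : Γ.IsWDR) (hcomm : Γ.IsCommutative)
    (hdrg : IsDRG Γ.underlying)
    (ha1 : ∀ x y, Γ.underlying.dist x y = 1 → aNum Γ.underlying 1 x y = q - 2)
    (hc2 : ∀ x y, Γ.underlying.dist x y = 2 → cNum Γ.underlying 2 x y = 2)
    (o : S) (m : ℕ) (hm1 : 1 ≤ m) (hmd : m ≤ n + 1)
    (hham : (Γ.trunc o m).underlying = hammingGraph (Fin m) S)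
    (i : Fin (n + 1)) (hi : i.1 < m)
    (α : Fin n → S) (hα : α ∈ Tset S o m)
    (x y : Fin (n + 1) → S) (hx : x ∈ lineSet i α) (hy : y ∈ lineSet i α)
    (hdeg : (Γ.line i α).outDeg ⟨y, hy⟩ < (Γ.line i α).outDeg ⟨x, hx⟩) :
    Γ.tdist x y = (1, 3) ∧ Γ.p (1, 3) (2, 2) (3, 1) ≠ 0 :=
  lemma_p_eq_four_general Γ q hq hwdr hcomm ha1 hc2 o m hmd hham i hi α hα x y hx hy hdeg
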